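/- arXiv:1011.3529 — 5 statements merged into one kernel-verified Lean document; each statement's English description precedes it below -/
import Mathlib

section
/- Cleaning Lemma (dimension-counting form) for subsystem codes: Let P = F_2^{2n} be the symplectic vector space of n-qubit Pauli operators, let G ≤ P be the gauge group (as a subspace) and S = G ∩ G^⊥ the stabilizer. Define 2k = 2n − dim G − dim S. For a partition of the qubits into M and its complement M^c, define g_bare(M) = dim(G^⊥ ∩ P_M) − dim(S ∩ P_M) and g(M^c) = dim(S^⊥ ∩ P_{M^c}) − dim(G ∩ P_{M^c}). Then g_bare(M) + g(M^c) = 2k. -/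
open Module

/-! Since `L = (L^⊥)^⊥`, we have `W^⊥ ⊓ L = (W ⊔ L^⊥)^⊥`, and the dimension formula for `W ⊔ L^⊥`
gives `dim (W^⊥ ⊓ L) + dim W = dim L + dim (W ⊓ L^⊥)`. Applied to `(G, P_M)` and `(S, P_{M^c})`,
the two correction terms `dim (G ⊓ P_{M^c})` and `dim (S ⊓ P_M)` are exactly the ones subtracted
in the statement, so the sum is `dim P_M + dim P_{M^c} - dim G - dim S = 2k`. -/

namespace LinearMap.BilinForm

lemma orthogonal_sup {R M : Type*} [CommSemiring R] [AddCommMonoid M] [Module R M]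
    (B : LinearMap.BilinForm R M) (N L : Submodule R M) :
    B.orthogonal (N ⊔ L) = B.orthogonal N ⊓ B.orthogonal L := by
  refine le_antisymm (le_inf (B.orthogonal_le le_sup_left) (B.orthogonal_le le_sup_right)) ?_
  rintro x ⟨hxN, hxL⟩ y hy
  obtain ⟨a, ha, c, hc, rfl⟩ := Submodule.mem_sup.mp hy
  change B (a + c) x = 0
  rw [map_add, LinearMap.add_apply, hxN a ha, hxL c hc, add_zero]

lemma finrank_orthogonal_inf_add_finrank {K V : Type*} [Field K] [AddCommGroup V] [Module K V]
    [FiniteDimensional K V] {B : LinearMap.BilinForm K V} (hB : B.Nondegenerate) (hB₀ : B.IsRefl)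
    (W L : Submodule K V) :
    finrank K (B.orthogonal W ⊓ L : Submodule K V) + finrank K W =
      finrank K L + finrank K (W ⊓ B.orthogonal L : Submodule K V) := by
  have hdual : B.orthogonal W ⊓ L = B.orthogonal (W ⊔ B.orthogonal L) := by
    rw [orthogonal_sup, orthogonal_orthogonal hB hB₀]
  rw [hdual, finrank_orthogonal hB]
  have hsup := Submodule.finrank_sup_add_finrank_inf_eq W (B.orthogonal L)
  have hL := finrank_orthogonal hB L
  have := Submodule.finrank_le (W ⊔ B.orthogonal L)
  have := Submodule.finrank_le L
  omega

end LinearMap.BilinForm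

theorem stmt4_general (P : Type*) [AddCommGroup P] [Module (ZMod 2) P]
    [FiniteDimensional (ZMod 2) P]
    (n m mc : ℕ) (hn : n = m + mc)
    (Φ : LinearMap.BilinForm (ZMod 2) P) (hnd : Φ.Nondegenerate) (halt : Φ.IsAlt)
    (PM PMc : Submodule (ZMod 2) P)
    (hperpM : Φ.orthogonal PM = PMc) (hperpMc : Φ.orthogonal PMc = PM)
    (hdimM : finrank (ZMod 2) PM = 2 * m) (hdimMc : finrank (ZMod 2) PMc = 2 * mc)
    (G : Submodule (ZMod 2) P) (S : Submodule (ZMod 2) P) (hS : S = G ⊓ Φ.orthogonal G)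
    (k : ℕ) (hk : 2 * k + finrank (ZMod 2) G + finrank (ZMod 2) S = 2 * n) :
    (finrank (ZMod 2) (Φ.orthogonal G ⊓ PM : Submodule (ZMod 2) P)
        - finrank (ZMod 2) (S ⊓ PM : Submodule (ZMod 2) P))
      + (finrank (ZMod 2) (Φ.orthogonal S ⊓ PMc : Submodule (ZMod 2) P)
        - finrank (ZMod 2) (G ⊓ PMc : Submodule (ZMod 2) P)) = 2 * k := by
  have hrefl : Φ.IsRefl := halt.isRefl
  have hSG : S ≤ Φ.orthogonal G := hS ▸ inf_le_right
  have hGS : G ≤ Φ.orthogonal S :=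
    (Φ.le_orthogonal_orthogonal hrefl).trans (Φ.orthogonal_le hSG)
  have hGM := LinearMap.BilinForm.finrank_orthogonal_inf_add_finrank hnd hrefl G PM
  have hSMc := LinearMap.BilinForm.finrank_orthogonal_inf_add_finrank hnd hrefl S PMc
  rw [hperpM] at hGM
  rw [hperpMc] at hSMc
  -- these keep the two truncated `ℕ` subtractions exact
  have hSM_le := Submodule.finrank_mono (inf_le_inf_right PM hSG)
  have hGMc_le := Submodule.finrank_mono (inf_le_inf_right PMc hGS)
  omega

/-- Cleaning Lemma (dimension-counting form) for subsystem codes: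
`g_bare(M) + g(M^c) = 2k`, where `g_bare(M) = dim(G^⊥ ⊓ P_M) − dim(S ⊓ P_M)`,
`g(M^c) = dim(S^⊥ ⊓ P_{M^c}) − dim(G ⊓ P_{M^c})`, `S = G ⊓ G^⊥`, and
`2k = 2n − dim G − dim S`.  (Stated additively, using
`S ⊓ P_M ≤ G^⊥ ⊓ P_M` and `G ⊓ P_{M^c} ≤ S^⊥ ⊓ P_{M^c}`.) -/
theorem stmt4 (P : Type*) [AddCommGroup P] [Module (ZMod 2) P]
    [FiniteDimensional (ZMod 2) P]
    (n m mc : ℕ) (hn : n = m + mc) (hP : finrank (ZMod 2) P = 2 * n)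
    (Φ : LinearMap.BilinForm (ZMod 2) P) (hnd : Φ.Nondegenerate) (halt : Φ.IsAlt)
    (PM PMc : Submodule (ZMod 2) P) (hMMc : IsCompl PM PMc)
    (hperpM : Φ.orthogonal PM = PMc) (hperpMc : Φ.orthogonal PMc = PM)
    (hdimM : finrank (ZMod 2) PM = 2 * m) (hdimMc : finrank (ZMod 2) PMc = 2 * mc)
    (G : Submodule (ZMod 2) P) (S : Submodule (ZMod 2) P) (hS : S = G ⊓ Φ.orthogonal G)
    (k : ℕ) (hk : 2 * k + finrank (ZMod 2) G + finrank (ZMod 2) S = 2 * n) :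
    (finrank (ZMod 2) (Φ.orthogonal G ⊓ PM : Submodule (ZMod 2) P)
        - finrank (ZMod 2) (S ⊓ PM : Submodule (ZMod 2) P))
      + (finrank (ZMod 2) (Φ.orthogonal S ⊓ PMc : Submodule (ZMod 2) P)
        - finrank (ZMod 2) (G ⊓ PMc : Submodule (ZMod 2) P)) = 2 * k :=
  stmt4_general P n m mc hn Φ hnd halt PM PMc hperpM hperpMc hdimM hdimMc G S hS k hk
end

section
/- Cleaning Lemma for stabilizer codes: Let P = F_2^{2n} be the symplectic vector space of n-qubit Pauli operators and S ≤ P a self-orthogonal (isotropic) subspace, i.e. S ≤ S^⊥, with k = n − dim S. For any partition of the qubits into M and M^c, define g(M) = dim(S^⊥ ∩ P_M) − dim(S ∩ P_M). Then g(M) + g(M^c) = 2k. -/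
open Module

/-! Double orthogonality gives `S ⊓ A = (S⊥ ⊔ A⊥)⊥`, so `dim (S ⊓ A) = dim V - dim (S⊥ ⊔ A⊥)`.
Expanding the joins `S⊥ ⊔ A⊥` and `S⊥ ⊔ A` by the modular dimension formula, the terms
`dim (S⊥ ⊓ A)` and `dim (S⊥ ⊓ A⊥)` cancel between `g(A)` and `g(A⊥)`, leaving
`2 dim S⊥ + dim A + dim A⊥ - 2 dim V = dim V - 2 dim S`, which is `2k` when `dim V = 2n`. -/

namespace LinearMap.BilinForm

variable {K V : Type*} [Field K] [AddCommGroup V] [Module K V]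

theorem orthogonal_sup_s5 (B : LinearMap.BilinForm K V) (A C : Submodule K V) :
    B.orthogonal (A ⊔ C) = B.orthogonal A ⊓ B.orthogonal C := by
  refine le_antisymm (le_inf (orthogonal_le le_sup_left) (orthogonal_le le_sup_right)) ?_
  rintro x ⟨hA, hC⟩ y hy
  obtain ⟨a, ha, c, hc, rfl⟩ := Submodule.mem_sup.mp hy
  rw [add_left, hA a ha, hC c hc, add_zero]

variable [FiniteDimensional K V] {B : LinearMap.BilinForm K V}

theorem finrank_inf_add_finrank_orthogonal_sup (hB : B.Nondegenerate) (hB₀ : B.IsRefl)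
    (S A : Submodule K V) :
    finrank K (S ⊓ A : Submodule K V)
      + finrank K (B.orthogonal S ⊔ B.orthogonal A : Submodule K V) = finrank K V := by
  have hinf : S ⊓ A = B.orthogonal (B.orthogonal S ⊔ B.orthogonal A) := by
    rw [orthogonal_sup_s5, orthogonal_orthogonal hB hB₀, orthogonal_orthogonal hB hB₀]
  rw [hinf, finrank_orthogonal hB]
  have := Submodule.finrank_le (B.orthogonal S ⊔ B.orthogonal A)
  omega

theorem finrank_orthogonal_inf_sub_finrank_inf_add (hB : B.Nondegenerate) (hB₀ : B.IsRefl)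
    (S A : Submodule K V) :
    ((finrank K (B.orthogonal S ⊓ A : Submodule K V) : ℤ) - finrank K (S ⊓ A : Submodule K V))
      + ((finrank K (B.orthogonal S ⊓ B.orthogonal A : Submodule K V) : ℤ)
        - finrank K (S ⊓ B.orthogonal A : Submodule K V))
      = finrank K V - 2 * finrank K S := by
  have hA := finrank_inf_add_finrank_orthogonal_sup hB hB₀ S A
  have hA' := finrank_inf_add_finrank_orthogonal_sup hB hB₀ S (B.orthogonal A)
  rw [orthogonal_orthogonal hB hB₀] at hA'
  have hsupA := Submodule.finrank_sup_add_finrank_inf_eq (B.orthogonal S) A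
  have hsupA' := Submodule.finrank_sup_add_finrank_inf_eq (B.orthogonal S) (B.orthogonal A)
  have hS := finrank_orthogonal hB S
  have hAperp := finrank_orthogonal hB A
  have hSle := Submodule.finrank_le S
  have hAle := Submodule.finrank_le A
  omega

end LinearMap.BilinForm

theorem stmt5_general (P : Type*) [AddCommGroup P] [Module (ZMod 2) P]
    [FiniteDimensional (ZMod 2) P]
    (n : ℕ) (hP : finrank (ZMod 2) P = 2 * n)
    (Φ : LinearMap.BilinForm (ZMod 2) P) (hnd : Φ.Nondegenerate) (halt : Φ.IsAlt)
    (PM PMc : Submodule (ZMod 2) P)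
    (hperpM : Φ.orthogonal PM = PMc)
    (S : Submodule (ZMod 2) P) (hiso : S ≤ Φ.orthogonal S)
    (k : ℕ) (hk : k + finrank (ZMod 2) S = n) :
    (finrank (ZMod 2) (Φ.orthogonal S ⊓ PM : Submodule (ZMod 2) P)
        - finrank (ZMod 2) (S ⊓ PM : Submodule (ZMod 2) P))
      + (finrank (ZMod 2) (Φ.orthogonal S ⊓ PMc : Submodule (ZMod 2) P)
        - finrank (ZMod 2) (S ⊓ PMc : Submodule (ZMod 2) P)) = 2 * k := by
  have hsum :=
    LinearMap.BilinForm.finrank_orthogonal_inf_sub_finrank_inf_add hnd halt.isRefl S PM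
  rw [hperpM] at hsum
  have hM := Submodule.finrank_mono (inf_le_inf_right PM hiso)
  have hMc := Submodule.finrank_mono (inf_le_inf_right PMc hiso)
  zify [hM, hMc]
  omega

/-- Cleaning Lemma for stabilizer codes: for an isotropic subspace `S ≤ S^⊥` of the
`2n`-dimensional symplectic space over `F_2` with `k = n − dim S`, and a partition of
the qubits inducing `P = P_M ⊕ P_{M^c}`, one has `g(M) + g(M^c) = 2k` where
`g(M) = dim(S^⊥ ⊓ P_M) − dim(S ⊓ P_M)`. -/
theorem stmt5 (P : Type*) [AddCommGroup P] [Module (ZMod 2) P]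
    [FiniteDimensional (ZMod 2) P]
    (n m mc : ℕ) (hn : n = m + mc) (hP : finrank (ZMod 2) P = 2 * n)
    (Φ : LinearMap.BilinForm (ZMod 2) P) (hnd : Φ.Nondegenerate) (halt : Φ.IsAlt)
    (PM PMc : Submodule (ZMod 2) P) (hMMc : IsCompl PM PMc)
    (hperpM : Φ.orthogonal PM = PMc) (hperpMc : Φ.orthogonal PMc = PM)
    (hdimM : finrank (ZMod 2) PM = 2 * m) (hdimMc : finrank (ZMod 2) PMc = 2 * mc)
    (S : Submodule (ZMod 2) P) (hiso : S ≤ Φ.orthogonal S)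
    (k : ℕ) (hk : k + finrank (ZMod 2) S = n) :
    (finrank (ZMod 2) (Φ.orthogonal S ⊓ PM : Submodule (ZMod 2) P)
        - finrank (ZMod 2) (S ⊓ PM : Submodule (ZMod 2) P))
      + (finrank (ZMod 2) (Φ.orthogonal S ⊓ PMc : Submodule (ZMod 2) P)
        - finrank (ZMod 2) (S ⊓ PMc : Submodule (ZMod 2) P)) = 2 * k :=
  stmt5_general P n hP Φ hnd halt PM PMc hperpM S hiso k hk
end

section
/- For a commuting projector code, a subset M of qubits is correctable (erasure of M is correctable) if and only if for every operator O supported on M, Π O Π = c_O Π for some scalar c_O, where Π is the projector onto the code space. Using this characterization: if M and N are disjoint subsets such that every operator supported on M satisfies Π O_M Π = c Π and every operator supported on N satisfies Π O_N Π = c' Π, and moreover Π factors as Π = Π_{N'} Π_{N'}^c where Π_{N'}, Π_{N'}^c are commuting projectors with Π_{N'} supported on the complement of M and Π_{N'}^c supported on the complement of N, then every operator supported on M ∪ N satisfies Π O Π = c_O Π. -/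
open Matrix

/-- An operator on `n` qubits (a matrix in the computational basis, indexed by
`Fin n → Fin 2`) is supported on a set `M` of qubits if it acts as the identity on the
qubits outside `M`: its matrix entries vanish unless the two basis labels agree outside
`M`, and depend only on the restrictions of the basis labels to `M`. -/
def SupportedOn {n : ℕ} (M : Set (Fin n))
    (O : Matrix (Fin n → Fin 2) (Fin n → Fin 2) ℂ) : Prop :=
  (∀ f g, (∃ i ∉ M, f i ≠ g i) → O f g = 0) ∧
  (∀ f g f' g', (∀ i ∈ M, f i = f' i) → (∀ i ∈ M, g i = g' i) →
    (∀ i ∉ M, f i = g i) → (∀ i ∉ M, f' i = g' i) → O f g = O f' g')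

open Classical in
noncomputable def eMat {n : ℕ} (M : Set (Fin n)) (a b : Fin n → Fin 2) :
    Matrix (Fin n → Fin 2) (Fin n → Fin 2) ℂ :=
  fun f g => if (∀ i ∈ M, f i = a i) ∧ (∀ i ∈ M, g i = b i) ∧ (∀ i ∉ M, f i = g i) then 1 else 0

open Classical in
noncomputable def oMat {n : ℕ} (M N : Set (Fin n))
    (O : Matrix (Fin n → Fin 2) (Fin n → Fin 2) ℂ) (a b : Fin n → Fin 2) :
    Matrix (Fin n → Fin 2) (Fin n → Fin 2) ℂ :=
  fun f g => if (∀ i ∉ N, f i = g i) then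
    O (fun i => if i ∈ M then a i else f i) (fun i => if i ∈ M then b i else g i) else 0

open Classical in
noncomputable def patt {n : ℕ} (M : Set (Fin n)) : Finset (Fin n → Fin 2) :=
  Finset.univ.filter (fun a => ∀ i, i ∉ M → a i = 0)

open Classical in
lemma decomp {n : ℕ} (M N : Set (Fin n)) (hMN : Disjoint M N)
    (O : Matrix (Fin n → Fin 2) (Fin n → Fin 2) ℂ) (hO : SupportedOn (M ∪ N) O) :
    O = ∑ a ∈ patt M, ∑ b ∈ patt M, eMat M a b * oMat M N O a b := by
  classical
  ext f g
  simp only [Matrix.sum_apply]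
  set a0 : Fin n → Fin 2 := fun i => if i ∈ M then f i else 0 with ha0
  set b0 : Fin n → Fin 2 := fun i => if i ∈ M then g i else 0 with hb0
  have ha0m : a0 ∈ patt M := by
    simp only [patt, Finset.mem_filter, Finset.mem_univ, true_and]
    intro i hi; simp [ha0, hi]
  have hb0m : b0 ∈ patt M := by
    simp only [patt, Finset.mem_filter, Finset.mem_univ, true_and]
    intro i hi; simp [hb0, hi]
  rw [Finset.sum_eq_single_of_mem a0 ha0m ?za]
  case za =>
    -- a ≠ a0 : every entry vanishes because f doesn't match a on M (or a ∉ patt impossible)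
    intro a haP hane
    have : ∃ i, a i ≠ a0 i := by
      by_contra hc; push_neg at hc; exact hane (funext hc)
    obtain ⟨i, hi⟩ := this
    by_cases hiM : i ∈ M
    · apply Finset.sum_eq_zero
      intro b _
      rw [Matrix.mul_apply]
      apply Finset.sum_eq_zero
      intro h _
      have : eMat M a b f h = 0 := by
        rw [eMat, if_neg]
        rintro ⟨c1, -, -⟩
        apply hi
        have : a0 i = f i := by simp [ha0, hiM]
        rw [this]; exact (c1 i hiM).symm
      rw [this, zero_mul]
    · exact absurd ((Finset.mem_filter.mp haP).2 i hiM) (by simpa [ha0, hiM] using hi)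
  rw [Finset.sum_eq_single_of_mem b0 hb0m ?zb]
  case zb =>
    intro b hbP hbne
    have : ∃ i, b i ≠ b0 i := by
      by_contra hc; push_neg at hc; exact hbne (funext hc)
    obtain ⟨i, hi⟩ := this
    by_cases hiM : i ∈ M
    · have hig : b i ≠ g i := by simpa [hb0, hiM] using hi
      rw [Matrix.mul_apply]
      apply Finset.sum_eq_zero
      intro h _
      by_cases hh : h i = b i
      · have : oMat M N O a0 b h g = 0 := by
          rw [oMat, if_neg]
          intro hc
          have hiN : i ∉ N := Set.disjoint_left.mp hMN hiM
          exact hig (hh ▸ hc i hiN)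
        rw [this, mul_zero]
      · have : eMat M a0 b f h = 0 := by
          rw [eMat, if_neg]
          rintro ⟨-, c2, -⟩; exact hh (c2 i hiM)
        rw [this, zero_mul]
    · exact absurd ((Finset.mem_filter.mp hbP).2 i hiM) (by simpa [hb0, hiM] using hi)
  -- main term
  set h0 : Fin n → Fin 2 := fun i => if i ∈ M then g i else f i with hh0
  rw [Matrix.mul_apply, Fintype.sum_eq_single h0 ?zh]
  case zh =>
    intro h hne
    have : ∃ i, h i ≠ h0 i := by
      by_contra hc; push_neg at hc; exact hne (funext hc)
    obtain ⟨i, hi⟩ := this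
    have : eMat M a0 b0 f h = 0 := by
      rw [eMat, if_neg]
      rintro ⟨-, c2, c3⟩
      by_cases hiM : i ∈ M
      · exact hi (by simpa [hh0, hiM, hb0] using c2 i hiM)
      · exact hi (by simpa [hh0, hiM] using (c3 i hiM).symm)
    rw [this, zero_mul]
  have he : eMat M a0 b0 f h0 = 1 := by
    rw [eMat, if_pos]
    refine ⟨fun i hi => by simp [ha0, hi], fun i hi => by simp [hh0, hb0, hi],
      fun i hi => by simp [hh0, hi]⟩
  rw [he, one_mul, oMat]
  have hf' : (fun i => if i ∈ M then a0 i else h0 i) = f := by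
    funext i; by_cases hiM : i ∈ M <;> simp [ha0, hh0, hiM]
  have hg' : (fun i => if i ∈ M then b0 i else g i) = g := by
    funext i; by_cases hiM : i ∈ M <;> simp [hb0, hiM]
  rw [hf', hg']
  by_cases hc : ∀ i ∉ N, h0 i = g i
  · rw [if_pos hc]
  · rw [if_neg hc]
    push_neg at hc
    obtain ⟨i, hiN, hne⟩ := hc
    have hiM : i ∉ M := by
      intro hiM; exact hne (by simp [hh0, hiM])
    refine hO.1 f g ⟨i, ?_, ?_⟩
    · rintro (h | h) <;> [exact hiM h; exact hiN h]
    · simpa [hh0, hiM] using hne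

lemma eMat_supported {n : ℕ} (M : Set (Fin n)) (a b : Fin n → Fin 2) :
    SupportedOn M (eMat M a b) := by
  classical
  constructor
  · intro f g ⟨i, hiM, hne⟩
    rw [eMat, if_neg]
    rintro ⟨-, -, h3⟩; exact hne (h3 i hiM)
  · intro f g f' g' h1 h2 h3 h4
    rw [eMat, eMat]
    congr 1
    simp only [eq_iff_iff]
    constructor
    · rintro ⟨c1, c2, -⟩
      exact ⟨fun i hi => (h1 i hi) ▸ c1 i hi, fun i hi => (h2 i hi) ▸ c2 i hi, h4⟩
    · rintro ⟨c1, c2, -⟩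
      exact ⟨fun i hi => (h1 i hi) ▸ c1 i hi, fun i hi => (h2 i hi) ▸ c2 i hi, h3⟩

lemma oMat_supported {n : ℕ} (M N : Set (Fin n)) (O : Matrix (Fin n → Fin 2) (Fin n → Fin 2) ℂ)
    (hO : SupportedOn (M ∪ N) O) (a b : Fin n → Fin 2) :
    SupportedOn N (oMat M N O a b) := by
  classical
  constructor
  · intro f g ⟨i, hiN, hne⟩
    rw [oMat, if_neg]
    intro h; exact hne (h i hiN)
  · intro f g f' g' h1 h2 h3 h4
    rw [oMat, oMat, if_pos h3, if_pos h4]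
    apply hO.2
    · intro i hi
      by_cases hiM : i ∈ M
      · simp [hiM]
      · have hiN : i ∈ N := hi.resolve_left hiM
        simp [hiM, h1 i hiN]
    · intro i hi
      by_cases hiM : i ∈ M
      · simp [hiM]
      · have hiN : i ∈ N := hi.resolve_left hiM
        simp [hiM, h2 i hiN]
    · intro i hi
      have hiM : i ∉ M := fun h => hi (Or.inl h)
      have hiN : i ∉ N := fun h => hi (Or.inr h)
      simp [hiM, h3 i hiN]
    · intro i hi
      have hiM : i ∉ M := fun h => hi (Or.inl h)
      have hiN : i ∉ N := fun h => hi (Or.inr h)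
      simp [hiM, h4 i hiN]

/-- Operators supported on disjoint sets commute. -/
lemma supportedOn_comm {n : ℕ} {A B : Set (Fin n)} (hd : Disjoint A B)
    {X Y : Matrix (Fin n → Fin 2) (Fin n → Fin 2) ℂ}
    (hX : SupportedOn A X) (hY : SupportedOn B Y) : X * Y = Y * X := by
  classical
  ext f g
  simp only [Matrix.mul_apply]
  by_cases hfg : ∀ i, i ∉ A → i ∉ B → f i = g i
  · set h0 : Fin n → Fin 2 := fun i => if i ∈ A then g i else f i with hh0
    set h1 : Fin n → Fin 2 := fun i => if i ∈ A then f i else g i with hh1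
    rw [Finset.sum_eq_single h0 ?_ (by simp), Finset.sum_eq_single h1 ?_ (by simp)]
    · have e1 : X f h0 = X h1 g := by
        apply hX.2
        · intro i hi; simp [hh1, hi]
        · intro i hi; simp [hh0, hi]
        · intro i hi; simp [hh0, hi]
        · intro i hi; simp [hh1, hi]
      have e2 : Y h0 g = Y f h1 := by
        refine hY.2 h0 g f h1 ?_ ?_ ?_ ?_
        · intro i hi
          have hiA : i ∉ A := Set.disjoint_right.mp hd hi
          simp [hh0, hiA]
        · intro i hi
          have hiA : i ∉ A := Set.disjoint_right.mp hd hi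
          simp [hh1, hiA]
        · intro i hi
          by_cases hiA : i ∈ A
          · simp [hh0, hiA]
          · simp [hh0, hiA, hfg i hiA hi]
        · intro i hi
          by_cases hiA : i ∈ A
          · simp [hh1, hiA]
          · simp [hh1, hiA, (hfg i hiA hi).symm]
      rw [e1, e2]; ring
    · -- for h ≠ h1, Y f h * X h g = 0
      intro h _ hne
      have : ∃ i, h i ≠ h1 i := by
        by_contra hc; push_neg at hc; exact hne (funext hc)
      obtain ⟨i, hi⟩ := this
      by_cases hiA : i ∈ A
      · have hz : Y f h = 0 := by
          refine hY.1 _ _ ⟨i, Set.disjoint_left.mp hd hiA, ?_⟩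
          intro hc; apply hi; simp [hh1, hiA, hc.symm]
        rw [hz, zero_mul]
      · have hz : X h g = 0 := by
          refine hX.1 _ _ ⟨i, hiA, ?_⟩
          intro hc; apply hi; simp [hh1, hiA, hc]
        rw [hz, mul_zero]
    · -- for h ≠ h0, X f h * Y h g = 0
      intro h _ hne
      have : ∃ i, h i ≠ h0 i := by
        by_contra hc; push_neg at hc; exact hne (funext hc)
      obtain ⟨i, hi⟩ := this
      by_cases hiA : i ∈ A
      · have hz : Y h g = 0 := by
          refine hY.1 _ _ ⟨i, Set.disjoint_left.mp hd hiA, ?_⟩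
          intro hc; apply hi; simp [hh0, hiA, hc]
        rw [hz, mul_zero]
      · have hz : X f h = 0 := by
          refine hX.1 _ _ ⟨i, hiA, ?_⟩
          intro hc; apply hi; simp [hh0, hiA, hc.symm]
        rw [hz, zero_mul]
  · push_neg at hfg
    obtain ⟨i, hiA, hiB, hne⟩ := hfg
    rw [Finset.sum_eq_zero, Finset.sum_eq_zero]
    · intro h _
      by_cases hh : h i = f i
      · have hz : X h g = 0 := by
          refine hX.1 _ _ ⟨i, hiA, ?_⟩
          rw [hh]; exact hne
        rw [hz, mul_zero]
      · have hz : Y f h = 0 := hY.1 _ _ ⟨i, hiB, fun hc => hh hc.symm⟩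
        rw [hz, zero_mul]
    · intro h _
      by_cases hh : h i = f i
      · have hz : Y h g = 0 := by
          refine hY.1 _ _ ⟨i, hiB, ?_⟩
          rw [hh]; exact hne
        rw [hz, mul_zero]
      · have hz : X f h = 0 := hX.1 _ _ ⟨i, hiA, fun hc => hh hc.symm⟩
        rw [hz, zero_mul]

lemma ins_aux {R : Type*} [Ring R] (q q1 q2 X Y : R)
    (h1 : X * q1 = q1 * X) (h2 : q2 * Y = Y * q2)
    (e1 : q * q1 = q) (e2 : q2 * q = q) (hfact : q = q1 * q2) :
    q * X * q * Y * q = q * (X * Y) * q := by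
  calc q * X * q * Y * q = (q * (X * q1)) * ((q2 * Y) * q) := by rw [hfact]; noncomm_ring
  _ = (q * (q1 * X)) * ((Y * q2) * q) := by rw [h1, h2]
  _ = ((q * q1) * X) * (Y * (q2 * q)) := by noncomm_ring
  _ = (q * X) * (Y * q) := by rw [e1, e2]
  _ = q * (X * Y) * q := by noncomm_ring

/-- Knill–Laflamme union lemma for commuting projector codes: if `M` and `N` are disjoint,
every operator supported on `M` or on `N` satisfies the erasure-correctability criterion
`Q O Q = c_O Q`, and the code projector factors as `Q = Π_{N'} Π_{N'}^c` into commuting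
projectors with `Π_{N'}` supported away from `M` and `Π_{N'}^c` supported away from `N`,
then every operator supported on `M ∪ N` satisfies `Q O Q = c_O Q`. -/
theorem stmt7 (n : ℕ) (Q : Matrix (Fin n → Fin 2) (Fin n → Fin 2) ℂ)
    (hproj : Q * Q = Q) (hherm : Qᴴ = Q)
    (M N : Set (Fin n)) (hMN : Disjoint M N)
    (hM : ∀ O, SupportedOn M O → ∃ c : ℂ, Q * O * Q = c • Q)
    (hN : ∀ O, SupportedOn N O → ∃ c : ℂ, Q * O * Q = c • Q)
    (QN' QNc : Matrix (Fin n → Fin 2) (Fin n → Fin 2) ℂ)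
    (hN'proj : QN' * QN' = QN') (hNcproj : QNc * QNc = QNc)
    (hcomm : Commute QN' QNc) (hfact : Q = QN' * QNc)
    (hN'supp : SupportedOn Mᶜ QN') (hNcsupp : SupportedOn Nᶜ QNc) :
    ∀ O, SupportedOn (M ∪ N) O → ∃ c : ℂ, Q * O * Q = c • Q := by
  classical
  have e1 : Q * QN' = Q := by
    rw [hfact]
    calc QN' * QNc * QN' = QN' * (QNc * QN') := mul_assoc _ _ _
    _ = QN' * (QN' * QNc) := by rw [hcomm.eq]
    _ = QN' * QN' * QNc := (mul_assoc _ _ _).symm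
    _ = QN' * QNc := by rw [hN'proj]
  have e2 : QNc * Q = Q := by
    rw [hfact]
    calc QNc * (QN' * QNc) = (QNc * QN') * QNc := (mul_assoc _ _ _).symm
    _ = (QN' * QNc) * QNc := by rw [hcomm.eq]
    _ = QN' * (QNc * QNc) := mul_assoc _ _ _
    _ = QN' * QNc := by rw [hNcproj]
  have hterm : ∀ X Y, SupportedOn M X → SupportedOn N Y →
      ∃ c : ℂ, Q * (X * Y) * Q = c • Q := by
    intro X Y hX hY
    obtain ⟨cM, hcM⟩ := hM X hX
    obtain ⟨cN, hcN⟩ := hN Y hY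
    have h1 : X * QN' = QN' * X := supportedOn_comm disjoint_compl_right hX hN'supp
    have h2 : QNc * Y = Y * QNc := (supportedOn_comm disjoint_compl_right hY hNcsupp).symm
    refine ⟨cM * cN, ?_⟩
    calc Q * (X * Y) * Q = Q * X * Q * Y * Q := (ins_aux Q QN' QNc X Y h1 h2 e1 e2 hfact).symm
    _ = (cM • Q) * Y * Q := by rw [hcM]
    _ = cM • (Q * Y * Q) := by rw [Matrix.smul_mul, Matrix.smul_mul]
    _ = cM • (cN • Q) := by rw [hcN]
    _ = (cM * cN) • Q := (smul_smul _ _ _)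
  intro O hO
  have hc : ∀ a b, ∃ c : ℂ, Q * (eMat M a b * oMat M N O a b) * Q = c • Q :=
    fun a b => hterm _ _ (eMat_supported M a b) (oMat_supported M N O hO a b)
  choose c hcc using hc
  refine ⟨∑ a ∈ patt M, ∑ b ∈ patt M, c a b, ?_⟩
  rw [decomp M N hMN O hO]
  rw [Finset.mul_sum, Finset.sum_mul]
  rw [Finset.sum_smul]
  refine Finset.sum_congr rfl fun a _ => ?_
  rw [Finset.mul_sum, Finset.sum_mul, Finset.sum_smul]
  refine Finset.sum_congr rfl fun b _ => ?_
  exact hcc a b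
end

section
/- Existence of nontrivial logical operator on the enlarged support: For a commuting projector code with code projector Π = ∏_a Π_a, if M is not correctable then there exists a nontrivial Hermitian logical operator H supported on M' (the union of M with the supports of all projectors acting nontrivially on M), i.e., H is Hermitian, supported on M', commutes with every Π_a, and Π H Π is not a scalar multiple of Π. -/
open Matrix

/-- The support of an operator: the set of qubits on which it acts nontrivially. -/
def opSupport {n : ℕ} (O : Matrix (Fin n → Fin 2) (Fin n → Fin 2) ℂ) : Set (Fin n) :=
  {i | ¬ SupportedOn ({i}ᶜ) O}

/-! Of the Hermitian real and imaginary parts of a non-correctable operator on `M`, one, say `O`,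
is still non-trivial on the code space. Let `A` be the product of the projectors acting nontrivially
on `M` and put `H = A O A`. It is Hermitian and supported on `M'`, and `Q H Q = Q O Q` because `Q`
absorbs every projector. A projector occurring in `A` absorbs `A` on either side, so it commutes
with `H`; any other projector is supported off `M`, so it commutes with `O` and, by the commuting
hypothesis, with `A`. -/

private lemma fin_two_add_self (a : Fin 2) : a + a = 0 := by revert a; decide

namespace SupportedOn

variable {n : ℕ} {S T : Set (Fin n)} {O P : Matrix (Fin n → Fin 2) (Fin n → Fin 2) ℂ}

theorem iff_forall_add :
    SupportedOn S O ↔ (∀ f g, (∃ i ∉ S, f i ≠ g i) → O f g = 0) ∧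
      ∀ x : Fin n → Fin 2, (∀ i ∈ S, x i = 0) → ∀ f g, O (f + x) (g + x) = O f g := by
  refine ⟨fun ⟨hzero, hlocal⟩ => ⟨hzero, fun x hx f g => ?_⟩, fun ⟨hzero, hflip⟩ => ⟨hzero, ?_⟩⟩
  · by_cases hfg : ∃ i ∉ S, f i ≠ g i
    · obtain ⟨i, hi, hne⟩ := hfg
      rw [hzero f g ⟨i, hi, hne⟩, hzero _ _ ⟨i, hi, fun h => hne (add_right_cancel h)⟩]
    · push Not at hfg
      exact hlocal _ _ _ _ (fun i hi => by simp [hx i hi]) (fun i hi => by simp [hx i hi])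
        (fun i hi => by simp [hfg i hi]) hfg
  · intro f g f' g' hf hg hfg hfg'
    have hx : ∀ i ∈ S, (f + f') i = 0 := fun i hi => by simp [hf i hi, fin_two_add_self]
    convert (hflip (f + f') hx f g).symm using 2 <;> funext i
    · simp [← add_assoc, fin_two_add_self]
    · by_cases hi : i ∈ S
      · simp [hg i hi, ← hx i hi]
      · simp [hfg i hi, hfg' i hi, ← add_assoc, fin_two_add_self]

theorem mono (h : SupportedOn S O) (hST : S ⊆ T) : SupportedOn T O := by
  rw [iff_forall_add] at h ⊢
  exact ⟨fun f g ⟨i, hi, hne⟩ => h.1 f g ⟨i, fun hS => hi (hST hS), hne⟩,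
    fun x hx => h.2 x fun i hi => hx i (hST hi)⟩

theorem univ (O : Matrix (Fin n → Fin 2) (Fin n → Fin 2) ℂ) : SupportedOn Set.univ O := by
  refine iff_forall_add.2 ⟨fun f g ⟨i, hi, _⟩ => absurd (Set.mem_univ i) hi, fun x hx f g => ?_⟩
  rw [show x = 0 from funext fun i => hx i (Set.mem_univ i), add_zero, add_zero]

theorem inter (hS : SupportedOn S O) (hT : SupportedOn T O) : SupportedOn (S ∩ T) O := by
  classical
  rw [iff_forall_add] at hS hT ⊢
  refine ⟨fun f g ⟨i, hi, hne⟩ => ?_, fun x hx f g => ?_⟩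
  · rcases not_and_or.1 hi with hiS | hiT
    exacts [hS.1 f g ⟨i, hiS, hne⟩, hT.1 f g ⟨i, hiT, hne⟩]
  · -- split the flip `x` into a flip outside `S` and a flip outside `T`
    set xS : Fin n → Fin 2 := fun i => if i ∈ S then 0 else x i
    set xT : Fin n → Fin 2 := fun i => if i ∈ S then x i else 0
    have hsplit : ∀ h : Fin n → Fin 2, h + x = h + xT + xS := fun h => by
      funext i; by_cases hi : i ∈ S <;> simp [xS, xT, hi]
    have hxS : ∀ i ∈ S, xS i = 0 := fun i hi => by simp [xS, hi]
    have hxT : ∀ i ∈ T, xT i = 0 := fun i hi => by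
      by_cases hiS : i ∈ S
      · simp [xT, hiS, hx i ⟨hiS, hi⟩]
      · simp [xT, hiS]
    rw [hsplit, hsplit, hS.2 xS hxS, hT.2 xT hxT]

theorem biInter {α : Type*} (s : Finset α) (U : α → Set (Fin n))
    (h : ∀ a ∈ s, SupportedOn (U a) O) : SupportedOn (⋂ a ∈ s, U a) O := by
  classical
  induction s using Finset.induction with
  | empty => simpa using univ O
  | insert a s _ ih =>
    rw [Finset.set_biInter_insert]
    exact (h a (s.mem_insert_self a)).inter (ih fun b hb => h b (Finset.mem_insert_of_mem hb))

theorem mul (hO : SupportedOn S O) (hP : SupportedOn T P) : SupportedOn (S ∪ T) (O * P) := by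
  rw [iff_forall_add] at hO hP ⊢
  refine ⟨fun f g ⟨i, hi, hne⟩ => ?_, fun x hx f g => ?_⟩
  · rw [Set.mem_union, not_or] at hi
    rw [Matrix.mul_apply]
    refine Finset.sum_eq_zero fun h _ => ?_
    by_cases hfh : f i = h i
    · rw [hP.1 h g ⟨i, hi.2, hfh ▸ hne⟩, mul_zero]
    · rw [hO.1 f h ⟨i, hi.1, hfh⟩, zero_mul]
  · simp only [Matrix.mul_apply]
    rw [← Equiv.sum_comp (Equiv.addRight x)]
    exact Finset.sum_congr rfl fun h _ => by
      simp only [Equiv.coe_addRight, hO.2 x (fun i hi => hx i (Or.inl hi)),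
        hP.2 x (fun i hi => hx i (Or.inr hi))]

theorem conjTranspose (h : SupportedOn S O) : SupportedOn S Oᴴ := by
  rw [iff_forall_add] at h ⊢
  exact ⟨fun f g ⟨i, hi, hne⟩ => by simp [h.1 g f ⟨i, hi, hne.symm⟩],
    fun x hx f g => by simp [h.2 x hx]⟩

theorem add (hO : SupportedOn S O) (hP : SupportedOn S P) : SupportedOn S (O + P) := by
  rw [iff_forall_add] at hO hP ⊢
  exact ⟨fun f g hfg => by simp [hO.1 f g hfg, hP.1 f g hfg],
    fun x hx f g => by simp [hO.2 x hx, hP.2 x hx]⟩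

theorem algebraMap (S : Set (Fin n)) (c : ℂ) :
    SupportedOn S (algebraMap ℂ (Matrix (Fin n → Fin 2) (Fin n → Fin 2) ℂ) c) := by
  refine iff_forall_add.2 ⟨fun f g ⟨i, _, hne⟩ => ?_, fun x _ f g => ?_⟩
  · simpa [Matrix.algebraMap_matrix_apply] using fun h => absurd (congrFun h i) hne
  · simp [Matrix.algebraMap_matrix_apply]

theorem commute (hO : SupportedOn S O) (hP : SupportedOn Sᶜ P) : Commute O P := by
  classical
  ext f g
  simp only [Matrix.mul_apply]
  -- the only intermediate basis states contributing to `O * P` and to `P * O`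
  set h₀ : Fin n → Fin 2 := fun i => if i ∈ S then g i else f i
  set h₁ : Fin n → Fin 2 := fun i => if i ∈ S then f i else g i
  rw [Fintype.sum_eq_single h₀ fun h hne => ?_, Fintype.sum_eq_single h₁ fun h hne => ?_]
  · rw [mul_comm, hO.2 f h₀ h₁ g (by simp +contextual [h₁]) (by simp +contextual [h₀])
      (by simp +contextual [h₀]) (by simp +contextual [h₁]),
      hP.2 h₀ g f h₁ (by simp +contextual [h₀]) (by simp +contextual [h₁])
      (by simp +contextual [h₀]) (by simp +contextual [h₁])]
  · obtain ⟨i, hi⟩ := Function.ne_iff.1 hne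
    by_cases hiS : i ∈ S
    · rw [hP.1 f h ⟨i, by simpa using hiS, fun e => hi (by simp [h₁, hiS, e])⟩, zero_mul]
    · rw [hO.1 h g ⟨i, hiS, fun e => hi (by simp [h₁, hiS, e])⟩, mul_zero]
  · obtain ⟨i, hi⟩ := Function.ne_iff.1 hne
    by_cases hiS : i ∈ S
    · rw [hP.1 h g ⟨i, by simpa using hiS, fun e => hi (by simp [h₀, hiS, e])⟩, mul_zero]
    · rw [hO.1 f h ⟨i, hiS, fun e => hi (by simp [h₀, hiS, e])⟩, zero_mul]

end SupportedOn

theorem supportedOn_opSupport (O : Matrix (Fin n → Fin 2) (Fin n → Fin 2) ℂ) :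
    SupportedOn (opSupport O) O := by
  classical
  convert SupportedOn.biInter (O := O) {i | SupportedOn {i}ᶜ O} (fun i => {i}ᶜ) (by simp)
  ext j
  simp only [opSupport, Set.mem_ofPred_eq, Set.mem_iInter, Finset.mem_filter,
    Finset.mem_univ, true_and, Set.mem_compl_iff, Set.mem_singleton_iff]
  exact ⟨fun hj i hi hji => hj (hji ▸ hi), fun hj hsupp => hj j hsupp rfl⟩

def supportedStarSubalgebra {n : ℕ} (S : Set (Fin n)) :
    StarSubalgebra ℂ (Matrix (Fin n → Fin 2) (Fin n → Fin 2) ℂ) where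
  carrier := {O | SupportedOn S O}
  mul_mem' := fun hO hP => by simpa using hO.mul hP
  add_mem' := SupportedOn.add
  algebraMap_mem' := SupportedOn.algebraMap S
  star_mem' := SupportedOn.conjTranspose

namespace Finset

variable {α β : Type*} [Monoid β] {s : Finset α} {f : α → β} {a : α}

theorem mul_noncommProd_of_isIdempotentElem (comm) (ha : a ∈ s) (hf : IsIdempotentElem (f a)) :
    f a * s.noncommProd f comm = s.noncommProd f comm := by
  classical
  rw [← mul_noncommProd_erase s ha f comm, ← mul_assoc, hf.eq]

theorem noncommProd_mul_of_isIdempotentElem (comm) (ha : a ∈ s) (hf : IsIdempotentElem (f a)) :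
    s.noncommProd f comm * f a = s.noncommProd f comm := by
  classical
  rw [← noncommProd_erase_mul s ha f comm, mul_assoc, hf.eq]

theorem mul_noncommProd_of_forall_mul_eq (comm) {x : β} (h : ∀ a ∈ s, x * f a = x) :
    x * s.noncommProd f comm = x := by
  classical
  induction s using Finset.induction with
  | empty => simp
  | insert b s hb ih =>
    rw [noncommProd_insert_of_notMem _ _ _ _ hb, ← mul_assoc, h b (mem_insert_self b s),
      ih _ fun a ha => h a (mem_insert_of_mem ha)]

theorem noncommProd_mul_of_forall_mul_eq (comm) {x : β} (h : ∀ a ∈ s, f a * x = x) :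
    s.noncommProd f comm * x = x := by
  classical
  induction s using Finset.induction with
  | empty => simp
  | insert b s hb ih =>
    rw [noncommProd_insert_of_notMem _ _ _ _ hb, mul_assoc,
      ih _ fun a ha => h a (mem_insert_of_mem ha), h b (mem_insert_self b s)]

theorem isSelfAdjoint_noncommProd [StarMul β] (comm) (hf : ∀ a ∈ s, IsSelfAdjoint (f a)) :
    IsSelfAdjoint (s.noncommProd f comm) := by
  classical
  induction s using Finset.induction with
  | empty => simp
  | insert b s hb ih =>
    rw [noncommProd_insert_of_notMem _ _ _ _ hb]
    have hcomm : Commute (f b) (s.noncommProd f (comm.mono (by simp))) :=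
      noncommProd_commute _ _ _ _ fun a ha =>
        comm (mem_insert_self b s) (mem_insert_of_mem ha) (ne_of_mem_of_not_mem ha hb).symm
    exact ((hf b (mem_insert_self b s)).commute_iff
      (ih _ fun a ha => hf a (mem_insert_of_mem ha))).1 hcomm

end Finset

open ComplexStarModule in
theorem StarSubalgebra.exists_isSelfAdjoint_of_not_exists_mul_mul_eq_smul {A : Type*} [Ring A]
    [StarRing A] [Algebra ℂ A] [StarModule ℂ A] (S : StarSubalgebra ℂ A) {Q O : A} (hO : O ∈ S)
    (h : ¬∃ c : ℂ, Q * O * Q = c • Q) :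
    ∃ O' ∈ S, IsSelfAdjoint O' ∧ ¬∃ c : ℂ, Q * O' * Q = c • Q := by
  by_contra! hall
  have hre : (ℜ O : A) ∈ S := by
    rw [realPart_apply_coe, RCLike.real_smul_eq_coe_smul (K := ℂ)]
    exact S.smul_mem (add_mem hO (star_mem hO)) _
  have him : (ℑ O : A) ∈ S := by
    rw [imaginaryPart_apply_coe, RCLike.real_smul_eq_coe_smul (K := ℂ)]
    exact S.smul_mem (S.smul_mem (sub_mem hO (star_mem hO)) _) _
  obtain ⟨c₁, h₁⟩ := hall _ hre (ℜ O).2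
  obtain ⟨c₂, h₂⟩ := hall _ him (ℑ O).2
  refine h ⟨c₁ + Complex.I * c₂, ?_⟩
  rw [← realPart_add_I_smul_imaginaryPart O, mul_add, add_mul, mul_smul_comm, smul_mul_assoc,
    h₁, h₂, smul_smul, add_smul]

theorem stmt10_general (n : ℕ) (ι : Type*) [Fintype ι]
    (Qa : ι → Matrix (Fin n → Fin 2) (Fin n → Fin 2) ℂ)
    (hproj : ∀ a, Qa a * Qa a = Qa a) (hherm : ∀ a, (Qa a)ᴴ = Qa a)
    (hcomm : ((Finset.univ : Finset ι) : Set ι).Pairwise fun a b => Commute (Qa a) (Qa b))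
    (Q : Matrix (Fin n → Fin 2) (Fin n → Fin 2) ℂ)
    (hQ : Q = Finset.univ.noncommProd Qa hcomm)
    (M : Set (Fin n))
    (hnc : ∃ O, SupportedOn M O ∧ ¬∃ c : ℂ, Q * O * Q = c • Q) :
    ∃ H : Matrix (Fin n → Fin 2) (Fin n → Fin 2) ℂ,
      Hᴴ = H ∧
      SupportedOn (M ∪ ⋃ a ∈ {a | ¬ SupportedOn Mᶜ (Qa a)}, opSupport (Qa a)) H ∧
      (∀ a, Commute (Qa a) H) ∧
      ¬∃ c : ℂ, Q * H * Q = c • Q := by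
  classical
  obtain ⟨O, hOM, hOQ⟩ := hnc
  obtain ⟨O', hO'M, hO'sa, hO'Q⟩ :=
    (supportedStarSubalgebra M).exists_isSelfAdjoint_of_not_exists_mul_mul_eq_smul hOM hOQ
  set U := ⋃ a ∈ {a | ¬ SupportedOn Mᶜ (Qa a)}, opSupport (Qa a)
  set S : Finset ι := {a | ¬ SupportedOn Mᶜ (Qa a)}
  set A := S.noncommProd Qa (hcomm.mono (by simp))
  have hAsa : IsSelfAdjoint A := Finset.isSelfAdjoint_noncommProd _ fun a _ => hherm a
  have hAU : SupportedOn U A :=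
    (supportedStarSubalgebra U).toSubalgebra.toSubmonoid.noncommProd_mem S Qa _ fun a ha =>
      (supportedOn_opSupport (Qa a)).mono
        (Set.subset_biUnion_of_mem (u := fun a => opSupport (Qa a)) (by simpa [S] using ha))
  have hQA : Q * A = Q := Finset.mul_noncommProd_of_forall_mul_eq _ fun a _ =>
    hQ ▸ Finset.noncommProd_mul_of_isIdempotentElem _ (Finset.mem_univ a) (hproj a)
  have hAQ : A * Q = Q := Finset.noncommProd_mul_of_forall_mul_eq _ fun a _ =>
    hQ ▸ Finset.mul_noncommProd_of_isIdempotentElem _ (Finset.mem_univ a) (hproj a)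
  have hH : IsSelfAdjoint (A * O' * A) := by simpa only [hAsa.star_eq] using hO'sa.conjugate A
  refine ⟨A * O' * A, hH.star_eq,
    ((hAU.mul hO'M).mul hAU).mono (by grind), fun a => ?_, ?_⟩
  · by_cases ha : a ∈ S
    · have hleft : Qa a * A = A := Finset.mul_noncommProd_of_isIdempotentElem _ ha (hproj a)
      have hright : A * Qa a = A := Finset.noncommProd_mul_of_isIdempotentElem _ ha (hproj a)
      change Qa a * (A * O' * A) = A * O' * A * Qa a
      rw [mul_assoc (A * O'), hright, ← mul_assoc, ← mul_assoc, hleft]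
    · have hAa : Commute (Qa a) A := Finset.noncommProd_commute _ _ _ _ fun b _ =>
        hcomm.of_refl (by simp) (by simp)
      have hO'a : Commute (Qa a) O' := (hO'M.commute (by simpa [S] using ha)).symm
      exact (hAa.mul_right hO'a).mul_right hAa
  · rwa [show Q * (A * O' * A) * Q = Q * A * O' * (A * Q) by simp only [mul_assoc], hQA, hAQ]

/-- Existence of a nontrivial Hermitian logical operator on the enlarged support:
for a commuting projector code with nonzero code projector `Q = ∏_a Q_a`, if `M` is not
correctable, then there is a Hermitian operator `H` supported on
`M' = M ∪ (supports of all projectors acting nontrivially on M)` which commutes with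
every projector `Q_a` and whose action `Q H Q` on the code space is not proportional
to `Q`. -/
theorem stmt10 (n : ℕ) (ι : Type*) [Fintype ι]
    (Qa : ι → Matrix (Fin n → Fin 2) (Fin n → Fin 2) ℂ)
    (hproj : ∀ a, Qa a * Qa a = Qa a) (hherm : ∀ a, (Qa a)ᴴ = Qa a)
    (hcomm : ((Finset.univ : Finset ι) : Set ι).Pairwise fun a b => Commute (Qa a) (Qa b))
    (Q : Matrix (Fin n → Fin 2) (Fin n → Fin 2) ℂ)
    (hQ : Q = Finset.univ.noncommProd Qa hcomm) (hQne : Q ≠ 0)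
    (M : Set (Fin n))
    (hnc : ∃ O, SupportedOn M O ∧ ¬∃ c : ℂ, Q * O * Q = c • Q) :
    ∃ H : Matrix (Fin n → Fin 2) (Fin n → Fin 2) ℂ,
      Hᴴ = H ∧
      SupportedOn (M ∪ ⋃ a ∈ {a | ¬ SupportedOn Mᶜ (Qa a)}, opSupport (Qa a)) H ∧
      (∀ a, Commute (Qa a) H) ∧
      ¬∃ c : ℂ, Q * H * Q = c • Q :=
  stmt10_general n ι Qa hproj hherm hcomm Q hQ M hnc
end

section
/- Expansion Lemma (abstract correctability form): Let 'correctable' be a predicate on subsets of qubits of a commuting projector code satisfying the Disentangling Lemma: whenever M and ∂₊M are correctable, there is a unitary U on ∂M such that every code vector ψ satisfies U ψ = φ_M ⊗ ψ'_{M^c} with φ_M independent of ψ. Then if M and A are correctable with ∂M ⊆ A, the set M ∪ A is correctable, where correctability of a set X means: the reduced state of any code vector on X, after erasure, determines no information (formally: erasure of X admits a recovery channel). -/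
open Matrix

/-- Erasure-correctability of a set of qubits, in the Knill–Laflamme algebraic form:
every operator supported on the set acts as a scalar within the code space. -/
def Correctable {n : ℕ} (Q : Matrix (Fin n → Fin 2) (Fin n → Fin 2) ℂ)
    (X : Set (Fin n)) : Prop :=
  ∀ O, SupportedOn X O → ∃ c : ℂ, Q * O * Q = c • Q

/-!
Conjugating by the disentangling unitary `U`, which acts inside `∂M ⊆ A`, turns every code
vector into a product `φ ⊗ ψ'` with `φ` fixed on `M`. An operator `O` on `M ∪ A` is traded for
`1_M ⊗ ⟨φ| U O Uᴴ |φ⟩_M`: this is supported on `A`, and on product vectors `φ ⊗ ψ'` its matrix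
elements are those of `U O Uᴴ` times `‖φ‖²`. Correctability of `A` therefore makes `Q O Q` a
multiple of `Q`, unless `φ = 0`, in which case `U Q = 0` and `Q O Q = 0`.
-/

open scoped Kronecker

namespace Matrix

variable {α β R : Type*} [Fintype α] [CommSemiring R] [StarRing R]

def contractFst (φ : α → R) (N : Matrix (α × β) (α × β) R) : Matrix β β R :=
  fun c d => ∑ a, ∑ b, star (φ a) * N (a, c) (b, d) * φ b

theorem star_dotProduct_mulVec_prod [Fintype β] (φ : α → R) (ψ₁ ψ₂ : β → R)
    (N : Matrix (α × β) (α × β) R) :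
    star (fun p : α × β => φ p.1 * ψ₁ p.2) ⬝ᵥ (N *ᵥ fun p => φ p.1 * ψ₂ p.2) =
      star ψ₁ ⬝ᵥ (contractFst φ N *ᵥ ψ₂) := by
  simp only [dotProduct, mulVec, contractFst, Fintype.sum_prod_type, Pi.star_apply, star_mul,
    Finset.mul_sum, Finset.sum_mul]
  rw [Finset.sum_comm]
  refine Finset.sum_congr rfl fun c _ => ?_
  refine (Finset.sum_congr rfl fun a _ => Finset.sum_comm).trans ?_
  rw [Finset.sum_comm]
  refine Finset.sum_congr rfl fun d _ => Finset.sum_congr rfl fun a _ =>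
    Finset.sum_congr rfl fun b _ => ?_
  ring

theorem contractFst_one_kronecker [DecidableEq α] (φ : α → R) (K : Matrix β β R) :
    contractFst φ ((1 : Matrix α α R) ⊗ₖ K) = (star φ ⬝ᵥ φ) • K := by
  ext c d
  simp only [contractFst, kronecker_apply, one_apply, smul_apply, dotProduct, Pi.star_apply,
    smul_eq_mul, Finset.sum_mul]
  refine Finset.sum_congr rfl fun a _ => ?_
  simp [Finset.sum_ite_eq]
  ring

theorem star_dotProduct_mulVec_submatrix {ι κ : Type*} [Fintype ι] [Fintype κ] (e : ι ≃ κ)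
    (u v : ι → R) (N : Matrix ι ι R) :
    star u ⬝ᵥ (N *ᵥ v) = star (u ∘ e.symm) ⬝ᵥ (N.submatrix e.symm e.symm *ᵥ (v ∘ e.symm)) := by
  rw [submatrix_mulVec_equiv, Equiv.symm_symm, Function.comp_assoc, Equiv.symm_comp_self,
    Function.comp_id]
  change _ = (star u ∘ e.symm) ⬝ᵥ _
  rw [comp_equiv_symm_dotProduct, Function.comp_assoc, Equiv.symm_comp_self, Function.comp_id]

theorem conjTranspose_mul_mul_apply {ι κ : Type*} [Fintype ι] [Fintype κ] [DecidableEq κ]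
    (W : Matrix ι κ R) (N : Matrix ι ι R) (x y : κ) :
    (Wᴴ * N * W) x y = star (W *ᵥ Pi.single x 1) ⬝ᵥ (N *ᵥ (W *ᵥ Pi.single y 1)) := by
  rw [mulVec_mulVec, star_mulVec, ← dotProduct_mulVec, mulVec_mulVec, ← Matrix.mul_assoc,
    mulVec_single_one]
  simp only [Pi.star_single, star_one, single_dotProduct, col_apply, one_mul]

end Matrix

section Qubits

open scoped Classical

variable {n : ℕ}

noncomputable def splitEquiv (X : Set (Fin n)) :
    (Fin n → Fin 2) ≃ (↥X → Fin 2) × (↥Xᶜ → Fin 2) :=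
  Equiv.piEquivPiSubtypeProd (· ∈ X) fun _ => Fin 2

theorem splitEquiv_apply (X : Set (Fin n)) (f : Fin n → Fin 2) :
    splitEquiv X f = (fun i : ↥X => f i, fun i : ↥Xᶜ => f i) := rfl

theorem splitEquiv_symm_apply_of_mem {X : Set (Fin n)} (p : (↥X → Fin 2) × (↥Xᶜ → Fin 2))
    {i : Fin n} (hi : i ∈ X) : (splitEquiv X).symm p i = p.1 ⟨i, hi⟩ :=
  dif_pos hi

theorem splitEquiv_symm_apply_of_notMem {X : Set (Fin n)} (p : (↥X → Fin 2) × (↥Xᶜ → Fin 2))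
    {i : Fin n} (hi : i ∉ X) : (splitEquiv X).symm p i = p.2 ⟨i, hi⟩ :=
  dif_neg hi

theorem splitEquiv_symm_apply_snd_of_notMem {X : Set (Fin n)} (a : ↥X → Fin 2)
    (f : Fin n → Fin 2) {i : Fin n} (hi : i ∉ X) :
    (splitEquiv X).symm (a, (splitEquiv X f).2) i = f i :=
  splitEquiv_symm_apply_of_notMem _ hi

theorem splitEquiv_snd_eq_iff {X : Set (Fin n)} {f g : Fin n → Fin 2} :
    (splitEquiv X f).2 = (splitEquiv X g).2 ↔ ∀ i ∉ X, f i = g i := by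
  simp [splitEquiv_apply, funext_iff, Set.mem_compl_iff]

theorem supportedOn_iff_exists_kronecker {X : Set (Fin n)}
    {O : Matrix (Fin n → Fin 2) (Fin n → Fin 2) ℂ} :
    SupportedOn X O ↔ ∃ K : Matrix (↥X → Fin 2) (↥X → Fin 2) ℂ,
      O = (K ⊗ₖ (1 : Matrix (↥Xᶜ → Fin 2) (↥Xᶜ → Fin 2) ℂ)).submatrix
      (splitEquiv X) (splitEquiv X) := by
  constructor
  · rintro ⟨hoff, hon⟩
    refine ⟨of fun a b => O ((splitEquiv X).symm (a, 0)) ((splitEquiv X).symm (b, 0)), ?_⟩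
    refine Matrix.ext fun f g => ?_
    rw [submatrix_apply, kroneckerMap_apply, of_apply, one_apply]
    split_ifs with h
    · rw [mul_one]
      refine hon _ _ _ _ (fun i hi => ?_) (fun i hi => ?_) (splitEquiv_snd_eq_iff.1 h)
        (fun i hi => ?_)
      · rw [splitEquiv_symm_apply_of_mem _ hi]; rfl
      · rw [splitEquiv_symm_apply_of_mem _ hi]; rfl
      · rw [splitEquiv_symm_apply_of_notMem _ hi, splitEquiv_symm_apply_of_notMem _ hi]
    · rw [mul_zero]
      refine hoff f g ?_
      by_contra! h'
      exact h (splitEquiv_snd_eq_iff.2 h')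
  · rintro ⟨K, rfl⟩
    constructor
    · rintro f g ⟨i, hi, hne⟩
      rw [submatrix_apply, kroneckerMap_apply, one_apply_ne, mul_zero]
      exact fun h => hne (splitEquiv_snd_eq_iff.1 h i hi)
    · intro f g f' g' hf hg hfg hfg'
      have hf1 : (splitEquiv X f).1 = (splitEquiv X f').1 := funext fun i => hf i i.2
      have hg1 : (splitEquiv X g).1 = (splitEquiv X g').1 := funext fun i => hg i i.2
      rw [submatrix_apply, submatrix_apply, kroneckerMap_apply, kroneckerMap_apply, hf1, hg1,
        splitEquiv_snd_eq_iff.2 hfg, splitEquiv_snd_eq_iff.2 hfg', one_apply_eq, one_apply_eq]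

theorem SupportedOn.mul_s12 {X : Set (Fin n)} {P R : Matrix (Fin n → Fin 2) (Fin n → Fin 2) ℂ}
    (hP : SupportedOn X P) (hR : SupportedOn X R) : SupportedOn X (P * R) := by
  obtain ⟨K, rfl⟩ := supportedOn_iff_exists_kronecker.1 hP
  obtain ⟨L, rfl⟩ := supportedOn_iff_exists_kronecker.1 hR
  rw [submatrix_mul_equiv, ← mul_kronecker_mul, Matrix.mul_one]
  exact supportedOn_iff_exists_kronecker.2 ⟨K * L, rfl⟩

theorem SupportedOn.conjTranspose_s12 {X : Set (Fin n)}
    {O : Matrix (Fin n → Fin 2) (Fin n → Fin 2) ℂ} (hO : SupportedOn X O) :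
    SupportedOn X Oᴴ := by
  obtain ⟨K, rfl⟩ := supportedOn_iff_exists_kronecker.1 hO
  rw [conjTranspose_submatrix, conjTranspose_kronecker, conjTranspose_one]
  exact supportedOn_iff_exists_kronecker.2 ⟨Kᴴ, rfl⟩

theorem SupportedOn.mono_s12 {X Y : Set (Fin n)} {O : Matrix (Fin n → Fin 2) (Fin n → Fin 2) ℂ}
    (hO : SupportedOn X O) (hXY : X ⊆ Y) : SupportedOn Y O := by
  constructor
  · rintro f g ⟨i, hi, hne⟩
    exact hO.1 f g ⟨i, fun h => hi (hXY h), hne⟩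
  · intro f g f' g' hf hg hfg hfg'
    by_cases hoff : ∀ i ∉ X, f i = g i
    · refine hO.2 f g f' g' (fun i hi => hf i (hXY hi)) (fun i hi => hg i (hXY hi)) hoff ?_
      intro i hi
      by_cases hiY : i ∈ Y
      · rw [← hf i hiY, ← hg i hiY]; exact hoff i hi
      · exact hfg' i hiY
    · push Not at hoff
      obtain ⟨i, hiX, hne⟩ := hoff
      have hne' : f' i ≠ g' i := by
        by_cases hiY : i ∈ Y
        · rw [← hf i hiY, ← hg i hiY]; exact hne
        · exact absurd (hfg i hiY) hne
      rw [hO.1 f g ⟨i, hiX, hne⟩, hO.1 f' g' ⟨i, hiX, hne'⟩]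

theorem Correctable.mono_s12 {Q : Matrix (Fin n → Fin 2) (Fin n → Fin 2) ℂ} {X Y : Set (Fin n)}
    (hY : Correctable Q Y) (hXY : X ⊆ Y) : Correctable Q X :=
  fun O hO => hY O (hO.mono_s12 hXY)

/-- `1_M ⊗ ⟨φ| O |φ⟩_M`, read through the splitting of the qubits into `M` and `Mᶜ`. -/
noncomputable def partialExpect (M : Set (Fin n)) (φ : (↥M → Fin 2) → ℂ)
    (O : Matrix (Fin n → Fin 2) (Fin n → Fin 2) ℂ) :
    Matrix (Fin n → Fin 2) (Fin n → Fin 2) ℂ :=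
  ((1 : Matrix (↥M → Fin 2) (↥M → Fin 2) ℂ) ⊗ₖ
    contractFst φ (O.submatrix (splitEquiv M).symm (splitEquiv M).symm)).submatrix
      (splitEquiv M) (splitEquiv M)

theorem partialExpect_apply (M : Set (Fin n)) (φ : (↥M → Fin 2) → ℂ)
    (O : Matrix (Fin n → Fin 2) (Fin n → Fin 2) ℂ) (f g : Fin n → Fin 2) :
    partialExpect M φ O f g =
      (1 : Matrix (↥M → Fin 2) (↥M → Fin 2) ℂ) (splitEquiv M f).1 (splitEquiv M g).1 *
        ∑ a, ∑ b, star (φ a) * O ((splitEquiv M).symm (a, (splitEquiv M f).2))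
          ((splitEquiv M).symm (b, (splitEquiv M g).2)) * φ b :=
  rfl

theorem SupportedOn.partialExpect {M A : Set (Fin n)}
    {O : Matrix (Fin n → Fin 2) (Fin n → Fin 2) ℂ} (hO : SupportedOn (M ∪ A) O)
    (φ : (↥M → Fin 2) → ℂ) : SupportedOn A (partialExpect M φ O) := by
  set e := splitEquiv M
  constructor
  · rintro f g ⟨i, hiA, hne⟩
    rw [partialExpect_apply]
    by_cases hiM : i ∈ M
    · rw [one_apply_ne fun h => hne (congrFun h ⟨i, hiM⟩), zero_mul]
    · refine mul_eq_zero_of_right _ (Finset.sum_eq_zero fun a _ => Finset.sum_eq_zero fun b _ => ?_)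
      rw [hO.1 _ _ ⟨i, fun h => h.elim hiM hiA, ?_⟩, mul_zero, zero_mul]
      rwa [splitEquiv_symm_apply_snd_of_notMem _ _ hiM, splitEquiv_symm_apply_snd_of_notMem _ _ hiM]
  · intro f g f' g' hf hg hfg hfg'
    have hM : (e f).1 = (e g).1 ↔ (e f').1 = (e g').1 := by
      simp only [e, splitEquiv_apply, funext_iff, Subtype.forall]
      refine forall₂_congr fun i hiM => ?_
      by_cases hiA : i ∈ A
      · rw [hf i hiA, hg i hiA]
      · simp only [hfg i hiA, hfg' i hiA]
    have hglue : ∀ (a : ↥M → Fin 2) (h h' : Fin n → Fin 2), (∀ i ∈ A, h i = h' i) →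
        ∀ i ∈ M ∪ A, e.symm (a, (e h).2) i = e.symm (a, (e h').2) i := by
      intro a h h' hh' i hi
      by_cases hiM : i ∈ M
      · rw [splitEquiv_symm_apply_of_mem _ hiM, splitEquiv_symm_apply_of_mem _ hiM]
      · rw [splitEquiv_symm_apply_snd_of_notMem _ _ hiM,
          splitEquiv_symm_apply_snd_of_notMem _ _ hiM]
        exact hh' i (hi.resolve_left hiM)
    have hoff : ∀ (a b : ↥M → Fin 2) (h k : Fin n → Fin 2), (∀ i ∉ A, h i = k i) →
        ∀ i ∉ M ∪ A, e.symm (a, (e h).2) i = e.symm (b, (e k).2) i := by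
      intro a b h k hhk i hi
      have hiM : i ∉ M := fun h => hi (Or.inl h)
      rw [splitEquiv_symm_apply_snd_of_notMem _ _ hiM, splitEquiv_symm_apply_snd_of_notMem _ _ hiM]
      exact hhk i fun h => hi (Or.inr h)
    rw [partialExpect_apply, partialExpect_apply, one_apply, one_apply, if_congr hM rfl rfl]
    congr 1
    refine Finset.sum_congr rfl fun a _ => Finset.sum_congr rfl fun b _ => ?_
    rw [hO.2 _ _ _ _ (hglue a f f' hf) (hglue b g g' hg) (hoff a b f g hfg) (hoff a b f' g' hfg')]

theorem comp_splitEquiv_symm {X : Set (Fin n)} {u : (Fin n → Fin 2) → ℂ}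
    {φ : (↥X → Fin 2) → ℂ} {ψ : (↥Xᶜ → Fin 2) → ℂ}
    (hu : ∀ f, u f = φ (fun i => f i.val) * ψ (fun i => f i.val)) :
    u ∘ (splitEquiv X).symm = fun p => φ p.1 * ψ p.2 := by
  funext p
  rw [Function.comp_apply, hu]
  conv_rhs => rw [← (splitEquiv X).apply_symm_apply p]
  rfl

theorem star_dotProduct_partialExpect_mulVec {M : Set (Fin n)} {φ : (↥M → Fin 2) → ℂ}
    {u₁ u₂ : (Fin n → Fin 2) → ℂ} {ψ₁ ψ₂ : (↥Mᶜ → Fin 2) → ℂ}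
    (h₁ : ∀ f, u₁ f = φ (fun i => f i.val) * ψ₁ (fun i => f i.val))
    (h₂ : ∀ f, u₂ f = φ (fun i => f i.val) * ψ₂ (fun i => f i.val))
    (O : Matrix (Fin n → Fin 2) (Fin n → Fin 2) ℂ) :
    star u₁ ⬝ᵥ (partialExpect M φ O *ᵥ u₂) = (star φ ⬝ᵥ φ) * (star u₁ ⬝ᵥ (O *ᵥ u₂)) := by
  rw [star_dotProduct_mulVec_submatrix (splitEquiv M),
    star_dotProduct_mulVec_submatrix (splitEquiv M) u₁, comp_splitEquiv_symm h₁, comp_splitEquiv_symm h₂, partialExpect, submatrix_submatrix,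
    Equiv.self_comp_symm, submatrix_id_id, star_dotProduct_mulVec_prod,
    star_dotProduct_mulVec_prod, contractFst_one_kronecker, smul_mulVec, dotProduct_smul,
    smul_eq_mul]

theorem conjTranspose_mul_partialExpect_mul {M : Set (Fin n)} {φ : (↥M → Fin 2) → ℂ}
    {W : Matrix (Fin n → Fin 2) (Fin n → Fin 2) ℂ}
    (hW : ∀ v, ∃ ψ : (↥Mᶜ → Fin 2) → ℂ, ∀ f,
      (W *ᵥ v) f = φ (fun i => f i.val) * ψ (fun i => f i.val))
    (O : Matrix (Fin n → Fin 2) (Fin n → Fin 2) ℂ) :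
    Wᴴ * partialExpect M φ O * W = (star φ ⬝ᵥ φ) • (Wᴴ * O * W) := by
  refine Matrix.ext fun x y => ?_
  obtain ⟨ψ₁, h₁⟩ := hW (Pi.single x 1)
  obtain ⟨ψ₂, h₂⟩ := hW (Pi.single y 1)
  rw [Matrix.smul_apply, conjTranspose_mul_mul_apply, conjTranspose_mul_mul_apply,
    star_dotProduct_partialExpect_mulVec h₁ h₂, smul_eq_mul]

end Qubits

/-- Expansion Lemma (abstract correctability form): assume the Disentangling Lemma,
i.e. whenever `M` and its external boundary `∂₊M` are correctable there is a unitary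
`U` supported on `∂M = ∂₊M ∪ ∂₋M` mapping every code vector `ψ` to a product
`φ_M ⊗ ψ'_{M^c}` across the `M`/`M^c` cut with `φ_M` independent of `ψ`.  Then if `M`
and `A` are correctable with `∂M ⊆ A`, the set `M ∪ A` is correctable. -/
theorem stmt12 (n : ℕ) (Q : Matrix (Fin n → Fin 2) (Fin n → Fin 2) ℂ)
    (hproj : Q * Q = Q) (hherm : Qᴴ = Q)
    (bdryPlus bdryMinus : Set (Fin n) → Set (Fin n))
    (hdisentangle : ∀ M : Set (Fin n), Correctable Q M → Correctable Q (bdryPlus M) →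
      ∃ U : Matrix (Fin n → Fin 2) (Fin n → Fin 2) ℂ,
        Uᴴ * U = 1 ∧ SupportedOn (bdryPlus M ∪ bdryMinus M) U ∧
        ∃ φ : (↥M → Fin 2) → ℂ, ∀ ψ : (Fin n → Fin 2) → ℂ, Q.mulVec ψ = ψ →
          ∃ ψ' : (↥(Mᶜ) → Fin 2) → ℂ, ∀ f : Fin n → Fin 2,
            U.mulVec ψ f = φ (fun i => f i.val) * ψ' (fun i => f i.val))
    (M A : Set (Fin n)) (hM : Correctable Q M) (hA : Correctable Q A)
    (hbdry : bdryPlus M ∪ bdryMinus M ⊆ A) :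
    Correctable Q (M ∪ A) := by
  classical
  obtain ⟨U, hU, hUsupp, φ, hprod⟩ :=
    hdisentangle M hM (hA.mono_s12 (Set.subset_union_left.trans hbdry))
  have hUA : SupportedOn A U := hUsupp.mono_s12 hbdry
  have hUMA : SupportedOn (M ∪ A) U := hUA.mono_s12 Set.subset_union_right
  have hW : ∀ v, ∃ ψ : (↥Mᶜ → Fin 2) → ℂ, ∀ f,
      ((U * Q) *ᵥ v) f = φ (fun i => f i.val) * ψ (fun i => f i.val) := fun v => by
    rw [← mulVec_mulVec]
    exact hprod _ (by rw [mulVec_mulVec, hproj])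
  intro O hO
  have hO' : SupportedOn (M ∪ A) (U * O * Uᴴ) := (hUMA.mul_s12 hO).mul_s12 hUMA.conjTranspose_s12
  obtain ⟨c, hc⟩ := hA _ ((hUA.conjTranspose_s12.mul_s12 (hO'.partialExpect φ)).mul_s12 hUA)
  have hQOQ : Q * O * Q = (U * Q)ᴴ * (U * O * Uᴴ) * (U * Q) := by
    simp only [conjTranspose_mul, hherm, Matrix.mul_assoc, ← Matrix.mul_assoc Uᴴ U, hU,
      Matrix.one_mul]
  have hscaled : (star φ ⬝ᵥ φ) • (Q * O * Q) = c • Q := by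
    rw [hQOQ, ← conjTranspose_mul_partialExpect_mul hW, ← hc]
    simp only [conjTranspose_mul, hherm, Matrix.mul_assoc]
  by_cases hφ : φ = 0
  · refine ⟨0, ?_⟩
    have hUQ : U * Q = 0 := Matrix.ext fun f y => by
      obtain ⟨ψ, h⟩ := hW (Pi.single y 1)
      simpa [mulVec_single_one, hφ] using h f
    rw [hQOQ, hUQ]
    simp
  · refine ⟨c / (star φ ⬝ᵥ φ), ?_⟩
    have hS : star φ ⬝ᵥ φ ≠ 0 := by
      open scoped ComplexOrder in exact dotProduct_star_self_eq_zero.not.2 hφ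
    rw [div_eq_inv_mul, mul_smul, ← hscaled, inv_smul_smul₀ hS]
end
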